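/- arXiv:1705.02473 — 3 statements merged into one kernel-verified Lean document; each statement's English description precedes it below -/
import Mathlib

section
/- For the crisis model, with d_1^α = (1/(σ√T))·(ln((S_0 + α/σ)/(K + (α/σ)e^{rT})) + (r + σ²/2)T) and d_2^α = d_1^α - σ√T, the discounted expected payoff E[e^{-rT}(S_T - K)^+] equals (S_0 + α/σ)Φ(d_1^α) - (Ke^{-rT} + α/σ)Φ(d_2^α), where Φ is the standard normal CDF. -/
/-!
With `A = S₀ + α/σ` and `B = K + (α/σ)e^{rT}` the crisis payoff is the Black–Scholes payoff
`(A e^{m + sZ} - B)⁺` with `Z` standard normal, `s = σ√T` and `m = (r - σ²/2)T`. It is positive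
exactly on the half-line `Z > -d₂`, and completing the square, `e^{su} φ(u) = e^{s²/2} φ(u - s)`,
turns the integral of `e^{sZ}` over that half-line into a Gaussian tail with mean `s`; by the
symmetry of the Gaussian, both tails are values of `Φ`.
-/

open Real MeasureTheory ProbabilityTheory

/-- Standard normal CDF. -/
noncomputable def Phi (d : ℝ) : ℝ :=
  ∫ u in Set.Iic d, Real.exp (-u ^ 2 / 2) / Real.sqrt (2 * Real.pi)

open Set
open scoped NNReal

lemma setIntegral_gaussianPDFReal (μ : ℝ) {v : ℝ≥0} (hv : v ≠ 0) (s : Set ℝ) :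
    ∫ x in s, gaussianPDFReal μ v x = (gaussianReal μ v).real s := by
  rw [measureReal_def, gaussianReal_apply_eq_integral _ hv,
    ENNReal.toReal_ofReal (integral_nonneg (gaussianPDFReal_nonneg μ v))]

lemma Phi_eq_gaussianReal_real_Iic (d : ℝ) : Phi d = (gaussianReal 0 1).real (Iic d) := by
  rw [← setIntegral_gaussianPDFReal 0 one_ne_zero, Phi]
  congr 1 with x
  simp [gaussianPDFReal, div_eq_inv_mul]

lemma gaussianReal_real_Ioi (μ a : ℝ) : (gaussianReal μ 1).real (Ioi a) = Phi (μ - a) := by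
  have hsymm : (gaussianReal 0 1).map (μ - ·) = gaussianReal μ 1 := by
    simpa using gaussianReal_map_const_sub (μ := 0) (v := 1) μ
  have hpre : (μ - ·) ⁻¹' Ioi a = Iio (μ - a) := by
    ext x
    simp [lt_sub_comm]
  have : NullSingletonClass (gaussianReal 0 1) := nullSingletonClass_gaussianReal one_ne_zero
  rw [← hsymm, map_measureReal_apply (by fun_prop) measurableSet_Ioi, hpre,
    measureReal_congr Iio_ae_eq_Iic, Phi_eq_gaussianReal_real_Iic]

lemma gaussianPDFReal_mul_exp_mul (s u : ℝ) :
    gaussianPDFReal 0 1 u * exp (s * u) = exp (s ^ 2 / 2) * gaussianPDFReal s 1 u := by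
  simp only [gaussianPDFReal, NNReal.coe_one, mul_one, sub_zero]
  rw [mul_assoc, ← exp_add, mul_left_comm, ← exp_add]
  ring_nf

lemma integral_gaussianReal_zero_eq_integral_comp_sqrt_mul {E : Type*} [NormedAddCommGroup E]
    [NormedSpace ℝ E] {v : ℝ} (hv : 0 ≤ v) {f : ℝ → E}
    (hf : AEStronglyMeasurable f (gaussianReal 0 ⟨v, hv⟩)) :
    ∫ w, f w ∂gaussianReal 0 ⟨v, hv⟩ = ∫ u, f (√v * u) ∂gaussianReal 0 1 := by
  have hmap : (gaussianReal 0 1).map (√v * ·) = gaussianReal 0 ⟨v, hv⟩ := by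
    simp_rw [gaussianReal_map_const_mul, mul_zero, mul_one, sq_sqrt hv]
    rfl
  rw [← hmap] at hf ⊢
  exact integral_map (by fun_prop) hf

lemma sub_pos_iff_neg_div_lt {A B s : ℝ} (hA : 0 < A) (hB : 0 < B) (hs : 0 < s) (m u : ℝ) :
    0 < A * exp (m + s * u) - B ↔ -((log (A / B) + m) / s) < u := by
  rw [sub_pos, ← div_lt_iff₀' hA, ← log_lt_iff_lt_exp (div_pos hB hA), neg_lt,
    lt_div_iff₀ hs, ← inv_div A B, log_inv]
  constructor <;> intro h <;> linarith

theorem integral_max_mul_exp_sub_zero_gaussianReal {A B s : ℝ} (hA : 0 < A) (hB : 0 < B)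
    (hs : 0 < s) (m : ℝ) :
    ∫ u, max (A * exp (m + s * u) - B) 0 ∂gaussianReal 0 1
      = A * exp (m + s ^ 2 / 2) * Phi ((log (A / B) + m) / s + s)
        - B * Phi ((log (A / B) + m) / s) := by
  set d := (log (A / B) + m) / s
  have hpayoff : ∀ u, gaussianPDFReal 0 1 u • max (A * exp (m + s * u) - B) 0
      = (Ioi (-d)).indicator (fun u ↦ A * exp (m + s ^ 2 / 2) * gaussianPDFReal s 1 u
          - B * gaussianPDFReal 0 1 u) u := by
    intro u
    by_cases hu : u ∈ Ioi (-d)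
    · rw [indicator_of_mem hu, max_eq_left ((sub_pos_iff_neg_div_lt hA hB hs m u).2 hu).le,
        smul_eq_mul, exp_add, exp_add]
      linear_combination A * exp m * gaussianPDFReal_mul_exp_mul s u
    · have hneg := not_lt.1 (mt (sub_pos_iff_neg_div_lt hA hB hs m u).1 hu)
      rw [indicator_of_notMem hu, max_eq_right hneg, smul_zero]
  simp_rw [integral_gaussianReal_eq_integral_smul one_ne_zero, hpayoff]
  rw [integral_indicator measurableSet_Ioi,
    integral_sub (((integrable_gaussianPDFReal s 1).const_mul _).restrict)
      (((integrable_gaussianPDFReal 0 1).const_mul _).restrict),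
    integral_const_mul, integral_const_mul, setIntegral_gaussianPDFReal _ one_ne_zero,
    setIntegral_gaussianPDFReal _ one_ne_zero, gaussianReal_real_Ioi, gaussianReal_real_Ioi,
    sub_neg_eq_add, add_comm s, zero_sub, neg_neg]

theorem crisis_call_price_general (S0 K σ α r T : ℝ)
    (hσ : 0 < σ) (hT : 0 < T)
    (h1 : 0 < S0 + α / σ) (h2 : 0 < K + α / σ * Real.exp (r * T)) :
    ∫ w, Real.exp (-(r * T)) *
        max ((S0 + α / σ) * Real.exp ((r - σ ^ 2 / 2) * T + σ * w)
          - α / σ * Real.exp (r * T) - K) 0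
        ∂(gaussianReal 0 ⟨T, hT.le⟩)
      = (S0 + α / σ) *
          Phi ((Real.log ((S0 + α / σ) / (K + α / σ * Real.exp (r * T)))
            + (r + σ ^ 2 / 2) * T) / (σ * Real.sqrt T))
        - (K * Real.exp (-(r * T)) + α / σ) *
          Phi ((Real.log ((S0 + α / σ) / (K + α / σ * Real.exp (r * T)))
            + (r + σ ^ 2 / 2) * T) / (σ * Real.sqrt T) - σ * Real.sqrt T) := by
  set A := S0 + α / σ
  set B := K + α / σ * exp (r * T)
  set s := σ * √T
  have hs : 0 < s := by positivity
  have hs_sq : s ^ 2 = σ ^ 2 * T := by rw [mul_pow, sq_sqrt hT.le]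
  have hpayoff : ∀ u,
      max (A * exp ((r - σ ^ 2 / 2) * T + σ * (√T * u)) - α / σ * exp (r * T) - K) 0
        = max (A * exp ((r - σ ^ 2 / 2) * T + s * u) - B) 0 := fun u ↦ by
    simp only [s, B]
    ring_nf
  have hd : (log (A / B) + (r - σ ^ 2 / 2) * T) / s + s
      = (log (A / B) + (r + σ ^ 2 / 2) * T) / s := by
    rw [div_add' _ _ _ hs.ne', ← sq, hs_sq]
    ring_nf
  have hdrift : (r - σ ^ 2 / 2) * T + s ^ 2 / 2 = r * T := by rw [hs_sq]; ring
  rw [integral_gaussianReal_zero_eq_integral_comp_sqrt_mul hT.le (by fun_prop),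
    integral_const_mul]
  simp_rw [hpayoff]
  rw [integral_max_mul_exp_sub_zero_gaussianReal h1 h2 hs, hd, hdrift,
    eq_sub_of_add_eq hd]
  have hdisc : exp (-(r * T)) * exp (r * T) = 1 := by rw [← exp_add]; simp
  linear_combination (A * Phi ((log (A / B) + (r + σ ^ 2 / 2) * T) / s)
    - α / σ * Phi ((log (A / B) + (r + σ ^ 2 / 2) * T) / s - s)) * hdisc

/-- Crisis-model pricing formula: with `W_T ~ N(0,T)` under the risk-neutral measure,
`E[e^{-rT}(S_T - K)^+] = (S_0 + α/σ)Φ(d₁^α) - (Ke^{-rT} + α/σ)Φ(d₂^α)`. -/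
theorem crisis_call_price (S0 K σ α r T : ℝ)
    (hS0 : 0 < S0) (hK : 0 < K) (hσ : 0 < σ) (hα : 0 ≤ α) (hT : 0 < T)
    (h1 : 0 < S0 + α / σ) (h2 : 0 < K + α / σ * Real.exp (r * T)) :
    ∫ w, Real.exp (-(r * T)) *
        max ((S0 + α / σ) * Real.exp ((r - σ ^ 2 / 2) * T + σ * w)
          - α / σ * Real.exp (r * T) - K) 0
        ∂(gaussianReal 0 ⟨T, hT.le⟩)
      = (S0 + α / σ) *
          Phi ((Real.log ((S0 + α / σ) / (K + α / σ * Real.exp (r * T)))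
            + (r + σ ^ 2 / 2) * T) / (σ * Real.sqrt T))
        - (K * Real.exp (-(r * T)) + α / σ) *
          Phi ((Real.log ((S0 + α / σ) / (K + α / σ * Real.exp (r * T)))
            + (r + σ ^ 2 / 2) * T) / (σ * Real.sqrt T) - σ * Real.sqrt T) :=
  crisis_call_price_general S0 K σ α r T hσ hT h1 h2
end

section
/- The partial derivative of the call price C(t,s) = (s + (α/σ)e^{rt})Φ(d_{t,1}^α) - (Ke^{-r(T-t)} + (α/σ)e^{rt})Φ(d_{t,2}^α) with respect to the asset price s equals Φ(d_{t,1}^α) (the Delta of the call). -/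
open Real MeasureTheory

/-- d_{t,1}^α of the crisis model. -/
noncomputable def d1 (s K σ α r t T : ℝ) : ℝ :=
  (Real.log ((s + α / σ * Real.exp (r * t)) / (K + α / σ * Real.exp (r * T)))
    + (r + σ ^ 2 / 2) * (T - t)) / (σ * Real.sqrt (T - t))

/-- d_{t,2}^α of the crisis model. -/
noncomputable def d2 (s K σ α r t T : ℝ) : ℝ :=
  d1 s K σ α r t T - σ * Real.sqrt (T - t)

/-- Crisis-model European call price. -/
noncomputable def C (s K σ α r t T : ℝ) : ℝ :=
  (s + α / σ * Real.exp (r * t)) * Phi (d1 s K σ α r t T)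
    - (K * Real.exp (-r * (T - t)) + α / σ * Real.exp (r * t)) * Phi (d2 s K σ α r t T)

/-! The call price is `C = y Φ(d) - L Φ(d - m)` in the shifted price `y = s + (α/σ)e^{rt}`, with
`d = (log (y/b) + c)/m` and a discounted strike `L = e^{m²/2 - c} b`. Differentiating gives
`Φ(d) + (y φ(d) - L φ(d - m)) d'`, and the bracket vanishes because `φ(d - m) = e^{dm - m²/2} φ(d)`
and `y = b e^{dm - c}`: exactly as for Black–Scholes, only the shift of `s` is new. -/

open ProbabilityTheory Set

theorem hasDerivAt_integral_Iic {E : Type*} [NormedAddCommGroup E] [NormedSpace ℝ E]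
    [CompleteSpace E] {f : ℝ → E} (hf : Integrable f) (hfc : Continuous f) (x : ℝ) :
    HasDerivAt (fun y => ∫ t in Iic y, f t) (f x) x := by
  have hsplit : (fun y => ∫ t in Iic y, f t) =
      fun y => (∫ t in Iic 0, f t) + ∫ t in (0 : ℝ)..y, f t := by
    funext y
    rw [← intervalIntegral.integral_Iic_sub_Iic hf.integrableOn hf.integrableOn, add_sub_cancel]
  rw [hsplit]
  exact (intervalIntegral.integral_hasDerivAt_right hf.intervalIntegrable
    (hfc.stronglyMeasurableAtFilter _ _) hfc.continuousAt).const_add _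

theorem Phi_eq_integral_gaussianPDFReal (d : ℝ) :
    Phi d = ∫ u in Iic d, gaussianPDFReal 0 1 u := by
  unfold Phi gaussianPDFReal
  congr 1
  funext u
  simp [div_eq_inv_mul]

theorem hasDerivAt_Phi (d : ℝ) : HasDerivAt Phi (gaussianPDFReal 0 1 d) d := by
  rw [funext Phi_eq_integral_gaussianPDFReal]
  exact hasDerivAt_integral_Iic (integrable_gaussianPDFReal 0 1)
    (by unfold gaussianPDFReal; fun_prop) d

theorem gaussianPDFReal_zero_one_sub (d m : ℝ) :
    gaussianPDFReal 0 1 (d - m) = exp (d * m - m ^ 2 / 2) * gaussianPDFReal 0 1 d := by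
  simp only [gaussianPDFReal, NNReal.coe_one, mul_one, sub_zero]
  rw [mul_left_comm, ← exp_add]
  ring_nf

theorem hasDerivAt_mul_Phi_sub_mul_Phi {y b c m L : ℝ} (hy : 0 < y) (hb : 0 < b) (hm : m ≠ 0)
    (hL : L = exp (m ^ 2 / 2 - c) * b) :
    HasDerivAt (fun x => x * Phi ((log (x / b) + c) / m) - L * Phi ((log (x / b) + c) / m - m))
      (Phi ((log (y / b) + c) / m)) y := by
  set d := (log (y / b) + c) / m with hd_def
  have hd : HasDerivAt (fun x => (log (x / b) + c) / m) (y⁻¹ / m) y := by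
    have hlog := ((hasDerivAt_id y).div_const b).log (div_pos hy hb).ne'
    exact ((hlog.add_const c).div_const m).congr_deriv (by simp only [id]; field_simp)
  have hy_eq : y = b * exp (d * m - c) := by
    rw [hd_def, div_mul_cancel₀ _ hm, add_sub_cancel_right, exp_log (div_pos hy hb)]
    exact (mul_div_cancel₀ y hb.ne').symm
  have hcancel : y * gaussianPDFReal 0 1 d = L * gaussianPDFReal 0 1 (d - m) := by
    rw [gaussianPDFReal_zero_one_sub, hL, hy_eq]
    have : exp (m ^ 2 / 2 - c) * exp (d * m - m ^ 2 / 2) = exp (d * m - c) := by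
      rw [← exp_add]; ring_nf
    linear_combination (-(b * gaussianPDFReal 0 1 d)) * this
  have hderiv := ((hasDerivAt_id y).mul ((hasDerivAt_Phi d).comp y hd)).sub
    (((hasDerivAt_Phi (d - m)).comp y (hd.sub_const m)).const_mul L)
  refine hderiv.congr_deriv ?_
  simp only [Function.comp_apply, id_eq]
  linear_combination (y⁻¹ / m) * hcancel

theorem crisis_delta_general (s K σ α r t T : ℝ)
    (hσ : 0 < σ) (htT : t < T)
    (h1 : 0 < s + α / σ * Real.exp (r * t))
    (h2 : 0 < K + α / σ * Real.exp (r * T)) :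
    HasDerivAt (fun x => C x K σ α r t T) (Phi (d1 s K σ α r t T)) s := by
  have hτ : 0 < T - t := sub_pos.mpr htT
  have hvol : σ * √(T - t) ≠ 0 := (mul_pos hσ (sqrt_pos.mpr hτ)).ne'
  have hdiscount : K * exp (-r * (T - t)) + α / σ * exp (r * t)
      = exp ((σ * √(T - t)) ^ 2 / 2 - (r + σ ^ 2 / 2) * (T - t))
        * (K + α / σ * exp (r * T)) := by
    have hexp : exp (-r * (T - t)) * exp (r * T) = exp (r * t) := by
      rw [← exp_add]; ring_nf
    rw [mul_pow, sq_sqrt hτ.le, show σ ^ 2 * (T - t) / 2 - (r + σ ^ 2 / 2) * (T - t)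
      = -r * (T - t) by ring]
    linear_combination (-(α / σ)) * hexp
  have hshifted := (hasDerivAt_mul_Phi_sub_mul_Phi h1 h2 hvol hdiscount).comp_add_const
  simpa only [C, d1, d2] using hshifted

/-- Delta of the crisis-model call: ∂C/∂s = Φ(d_{t,1}^α). -/
theorem crisis_delta (s K σ α r t T : ℝ)
    (hs : 0 < s) (hK : 0 < K) (hσ : 0 < σ) (hα : 0 ≤ α)
    (ht : 0 ≤ t) (htT : t < T)
    (h1 : 0 < s + α / σ * Real.exp (r * t))
    (h2 : 0 < K + α / σ * Real.exp (r * T)) :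
    HasDerivAt (fun x => C x K σ α r t T) (Phi (d1 s K σ α r t T)) s :=
  crisis_delta_general s K σ α r t T hσ htT h1 h2
end

section
/- The second partial derivative of the call price C(t,s) = (s + (α/σ)e^{rt})Φ(d_{t,1}^α) - (Ke^{-r(T-t)} + (α/σ)e^{rt})Φ(d_{t,2}^α) with respect to s (the Gamma) equals e^{-(d_{t,1}^α)²/2} / ((s + (α/σ)e^{rt})·σ·√(2π(T-t))). -/
/-!
Writing `S = s + (α/σ)e^{rt}` and `D = Ke^{-r(T-t)} + (α/σ)e^{rt} = e^{-r(T-t)}(K + (α/σ)e^{rT})`,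
the crisis price is the Black–Scholes call `S Φ(d) - D Φ(d - v)` in the shifted spot `S`, with
total volatility `v = σ√(T-t)` and `d = (log (S/D) + v²/2)/v = d_{t,1}^α`. The Gaussian identity
`S φ(d) = D φ(d - v)` cancels the terms coming from differentiating `d`, so the Delta is `Φ(d)`
and the Gamma is `φ(d) · ∂d/∂S = φ(d)/(S v)`.
-/

open Real

open Filter Topology MeasureTheory

theorem hasDerivAt_integral_Iic_s5 {f : ℝ → ℝ} (hf : Continuous f) (hfi : Integrable f) (x : ℝ) :
    HasDerivAt (fun y => ∫ u in Set.Iic y, f u) (f x) x := by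
  have hsplit : (fun y => ∫ u in Set.Iic y, f u)
      = fun y => (∫ u in Set.Iic 0, f u) + ∫ u in (0 : ℝ)..y, f u := by
    ext y
    rw [← intervalIntegral.integral_Iic_sub_Iic hfi.integrableOn hfi.integrableOn]
    ring
  rw [hsplit]
  exact (intervalIntegral.integral_hasDerivAt_right (hf.intervalIntegrable 0 x)
    (hf.stronglyMeasurableAtFilter _ _) hf.continuousAt).const_add _

theorem hasDerivAt_Phi_s5 (d : ℝ) :
    HasDerivAt Phi (exp (-d ^ 2 / 2) / √(2 * π)) d := by
  have hint : Integrable fun u : ℝ => exp (-u ^ 2 / 2) / √(2 * π) := by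
    convert (integrable_exp_neg_mul_sq (by norm_num : (0 : ℝ) < 1 / 2)).div_const √(2 * π)
      using 4
    ring
  exact hasDerivAt_integral_Iic_s5 (by fun_prop) hint d

namespace BlackScholes

/-- The Black–Scholes `d₁` for spot `S`, discounted strike `D` and total volatility `v`. -/
noncomputable def d (D v S : ℝ) : ℝ := (log (S / D) + v ^ 2 / 2) / v

noncomputable def call (D v S : ℝ) : ℝ := S * Phi (d D v S) - D * Phi (d D v S - v)

variable {D v S : ℝ}

theorem hasDerivAt_d (hD : D ≠ 0) (hS : S ≠ 0) : HasDerivAt (d D v) (1 / (S * v)) S := by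
  have hlog : HasDerivAt (fun x => log (x / D)) (1 / S) S := by
    convert ((hasDerivAt_id' S).div_const D).log (div_ne_zero hS hD) using 1
    field_simp
  exact ((hlog.add_const (v ^ 2 / 2)).div_const v).congr_deriv (div_div _ _ _)

theorem mul_exp_neg_d_sq (hD : 0 < D) (hS : 0 < S) (hv : v ≠ 0) :
    S * exp (-d D v S ^ 2 / 2) = D * exp (-(d D v S - v) ^ 2 / 2) := by
  have hdv : d D v S * v = log (S / D) + v ^ 2 / 2 := div_mul_cancel₀ _ hv
  have hexp : -(d D v S - v) ^ 2 / 2 = -d D v S ^ 2 / 2 + log (S / D) := by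
    linear_combination hdv
  rw [hexp, exp_add, exp_log (div_pos hS hD)]
  field_simp

theorem hasDerivAt_call (hD : 0 < D) (hS : 0 < S) (hv : v ≠ 0) :
    HasDerivAt (call D v) (Phi (d D v S)) S := by
  have hd := hasDerivAt_d (v := v) hD.ne' hS.ne'
  have hcall := ((hasDerivAt_id S).mul ((hasDerivAt_Phi_s5 _).comp S hd)).sub
    (((hasDerivAt_Phi_s5 _).comp S (hd.sub_const v)).const_mul D)
  refine hcall.congr_deriv ?_
  simp only [Function.comp_apply, id]
  linear_combination (1 / (√(2 * π) * (S * v))) * mul_exp_neg_d_sq hD hS hv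

theorem hasDerivAt_deriv_call (hD : 0 < D) (hS : 0 < S) (hv : v ≠ 0) :
    HasDerivAt (deriv (call D v)) (exp (-d D v S ^ 2 / 2) / (S * v * √(2 * π))) S := by
  have hdelta : deriv (call D v) =ᶠ[𝓝 S] fun x => Phi (d D v x) := by
    filter_upwards [lt_mem_nhds hS] with x hx
    exact (hasDerivAt_call hD hx hv).deriv
  refine HasDerivAt.congr_of_eventuallyEq ?_ hdelta
  refine ((hasDerivAt_Phi_s5 _).comp S (hasDerivAt_d (v := v) hD.ne' hS.ne')).congr_deriv ?_
  field_simp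

end BlackScholes

section Crisis

variable {K σ α r t T : ℝ}

theorem discounted_strike_eq :
    K * exp (-r * (T - t)) + α / σ * exp (r * t)
      = exp (-r * (T - t)) * (K + α / σ * exp (r * T)) := by
  have h : exp (-r * (T - t)) * exp (r * T) = exp (r * t) := by
    rw [← exp_add]; ring_nf
  linear_combination (-(α / σ)) * h

theorem d1_eq_blackScholes_d {x : ℝ} (htT : t ≤ T) (hx : x + α / σ * exp (r * t) ≠ 0)
    (hB : K + α / σ * exp (r * T) ≠ 0) :
    d1 x K σ α r t T = BlackScholes.d (exp (-r * (T - t)) * (K + α / σ * exp (r * T)))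
      (σ * √(T - t)) (x + α / σ * exp (r * t)) := by
  rw [d1, BlackScholes.d, log_div hx hB, log_div hx (mul_ne_zero (exp_ne_zero _) hB),
    log_mul (exp_ne_zero _) hB, log_exp, mul_pow, sq_sqrt (sub_nonneg.2 htT)]
  ring_nf

theorem C_eq_blackScholes_call {x : ℝ} (htT : t ≤ T) (hx : x + α / σ * exp (r * t) ≠ 0)
    (hB : K + α / σ * exp (r * T) ≠ 0) :
    C x K σ α r t T = BlackScholes.call (exp (-r * (T - t)) * (K + α / σ * exp (r * T)))
      (σ * √(T - t)) (x + α / σ * exp (r * t)) := by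
  rw [C, d2, BlackScholes.call, d1_eq_blackScholes_d htT hx hB, discounted_strike_eq]

end Crisis

theorem crisis_gamma_general (s K σ α r t T : ℝ)
    (hσ : 0 < σ)
    (htT : t < T)
    (h1 : 0 < s + α / σ * Real.exp (r * t))
    (h2 : 0 < K + α / σ * Real.exp (r * T)) :
    HasDerivAt (deriv (fun x => C x K σ α r t T))
      (Real.exp (-(d1 s K σ α r t T) ^ 2 / 2) /
        ((s + α / σ * Real.exp (r * t)) * σ * Real.sqrt (2 * Real.pi * (T - t)))) s := by
  set a := α / σ * exp (r * t)
  set D := exp (-r * (T - t)) * (K + α / σ * exp (r * T))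
  set v := σ * √(T - t)
  have hv : v ≠ 0 := (mul_pos hσ (sqrt_pos.2 (sub_pos.2 htT))).ne'
  have hD : 0 < D := mul_pos (exp_pos _) h2
  have hC : (fun x => C x K σ α r t T) =ᶠ[𝓝 s] fun x => BlackScholes.call D v (x + a) := by
    filter_upwards [lt_mem_nhds (neg_lt_iff_pos_add.2 h1)] with x hx
    exact C_eq_blackScholes_call htT.le (neg_lt_iff_pos_add.1 hx).ne' h2.ne'
  have hgamma := (BlackScholes.hasDerivAt_deriv_call hD h1 hv).comp_add_const s a
  have hderiv : deriv (fun x => C x K σ α r t T) =ᶠ[𝓝 s]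
      fun x => deriv (BlackScholes.call D v) (x + a) :=
    hC.deriv.trans (.of_forall fun x => deriv_comp_add_const _ _ _)
  refine (hgamma.congr_of_eventuallyEq hderiv).congr_deriv ?_
  rw [d1_eq_blackScholes_d htT.le h1.ne' h2.ne', sqrt_mul' _ (sub_nonneg.2 htT.le)]
  ring

/-- Gamma of the crisis-model call: ∂²C/∂s² = e^{-(d₁)²/2}/((s + (α/σ)e^{rt})σ√(2π(T-t))). -/
theorem crisis_gamma (s K σ α r t T : ℝ)
    (hs : 0 < s) (hK : 0 < K) (hσ : 0 < σ) (hα : 0 ≤ α)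
    (ht : 0 ≤ t) (htT : t < T)
    (h1 : 0 < s + α / σ * Real.exp (r * t))
    (h2 : 0 < K + α / σ * Real.exp (r * T)) :
    HasDerivAt (deriv (fun x => C x K σ α r t T))
      (Real.exp (-(d1 s K σ α r t T) ^ 2 / 2) /
        ((s + α / σ * Real.exp (r * t)) * σ * Real.sqrt (2 * Real.pi * (T - t)))) s :=
  crisis_gamma_general s K σ α r t T hσ htT h1 h2
end
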